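/- arXiv:1611.05838 — 2 statements merged into one kernel-verified Lean document; each statement's English description precedes it below -/
import Mathlib

section
/- Let c > 0 and let Z be a normal random variable with mean 0 and variance 6. Then E[(1 - exp(-1/(12c) + Z/(6√c)))₊] = Erf(1/(4√3·√c)), where x₊ = max(x,0) and Erf(x) = (2/√π)∫₀ˣ e^{-t²} dt. -/
open MeasureTheory ProbabilityTheory

open Real Set in
lemma wishart_aux (c : ℝ) (hc : 0 < c) :
    ∫ z, gaussianPDFReal 0 6 z *
        max (1 - Real.exp (-(1 / (12 * c)) + z / (6 * Real.sqrt c))) 0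
      = (2 / Real.sqrt Real.pi) *
        ∫ t in (0 : ℝ)..(1 / (4 * Real.sqrt 3 * Real.sqrt c)), Real.exp (-t ^ 2) := by
  set s := Real.sqrt c with hs
  have hs0 : 0 < s := Real.sqrt_pos.2 hc
  have hss : s * s = c := Real.mul_self_sqrt hc.le
  set z₀ : ℝ := 1 / (2 * s) with hz₀
  set m : ℝ := 1 / s with hm
  have hz₀pos : 0 < z₀ := by positivity
  -- exponent rewriting
  have hexp : ∀ z : ℝ, -(1 / (12 * c)) + z / (6 * s) = (z - z₀) / (6 * s) := by
    intro z
    rw [hz₀, ← hss]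
    field_simp
    ring
  -- key pdf identity
  have hkey : ∀ z : ℝ, gaussianPDFReal 0 6 z * Real.exp (-(1 / (12 * c)) + z / (6 * s))
      = gaussianPDFReal 0 6 (z - m) := by
    intro z
    simp only [gaussianPDFReal, sub_zero, NNReal.coe_ofNat]
    rw [mul_assoc, ← Real.exp_add]
    congr 1
    rw [hm, ← hss]
    field_simp
    ring
  -- pointwise indicator identity
  have hpt : (fun z => gaussianPDFReal 0 6 z *
        max (1 - Real.exp (-(1 / (12 * c)) + z / (6 * s))) 0)
      = Set.indicator (Iic z₀)
          (fun z => gaussianPDFReal 0 6 z - gaussianPDFReal 0 6 (z - m)) := by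
    funext z
    by_cases hz : z ≤ z₀
    · rw [Set.indicator_of_mem (Set.mem_Iic.mpr hz) (fun z => gaussianPDFReal 0 6 z - gaussianPDFReal 0 6 (z - m))]
      have h1 : Real.exp (-(1 / (12 * c)) + z / (6 * s)) ≤ 1 := by
        rw [hexp z, Real.exp_le_one_iff]
        apply div_nonpos_of_nonpos_of_nonneg (by linarith) (by positivity)
      rw [max_eq_left (by linarith), mul_sub, mul_one, hkey z]
    · rw [Set.indicator_of_notMem (fun hh => hz (Set.mem_Iic.mp hh)) (fun z => gaussianPDFReal 0 6 z - gaussianPDFReal 0 6 (z - m))]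
      have h1 : (1 : ℝ) ≤ Real.exp (-(1 / (12 * c)) + z / (6 * s)) := by
        rw [hexp z, Real.one_le_exp_iff]
        push_neg at hz
        exact div_nonneg (by linarith) (by positivity)
      rw [max_eq_right (by linarith), mul_zero]
  rw [hpt, MeasureTheory.integral_indicator measurableSet_Iic]
  have hint1 : IntegrableOn (gaussianPDFReal 0 6) (Iic z₀) :=
    (integrable_gaussianPDFReal 0 6).integrableOn
  have hint2 : IntegrableOn (fun z => gaussianPDFReal 0 6 (z - m)) (Iic z₀) := by
    have : (fun z => gaussianPDFReal 0 6 (z - m)) = gaussianPDFReal (0 + m) 6 := by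
      funext z; exact gaussianPDFReal_sub z m
    rw [this]
    exact (integrable_gaussianPDFReal _ 6).integrableOn
  rw [MeasureTheory.integral_sub hint1 hint2]
  -- translate second integral
  have htrans : ∫ z in Iic z₀, gaussianPDFReal 0 6 (z - m)
      = ∫ z in Iic (-z₀), gaussianPDFReal 0 6 z := by
    rw [← MeasureTheory.integral_indicator measurableSet_Iic,
        ← MeasureTheory.integral_indicator measurableSet_Iic]
    have heq : (Iic z₀).indicator (fun z => gaussianPDFReal 0 6 (z - m))
        = fun z => (Iic (-z₀)).indicator (gaussianPDFReal 0 6) (z - m) := by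
      funext z
      have hzm : z - m ∈ Iic (-z₀) ↔ z ∈ Iic z₀ := by
        simp only [mem_Iic]
        constructor <;> intro h
        · have : -z₀ = z₀ - m := by rw [hz₀, hm]; field_simp; ring
          rw [this] at h; linarith
        · have : -z₀ = z₀ - m := by rw [hz₀, hm]; field_simp; ring
          rw [this]; linarith
      by_cases h : z ∈ Iic z₀
      · rw [Set.indicator_of_mem h, Set.indicator_of_mem (hzm.2 h)]
      · rw [Set.indicator_of_notMem h, Set.indicator_of_notMem (fun hh => h (hzm.1 hh))]
    rw [heq]
    exact MeasureTheory.integral_sub_right_eq_self ((Iic (-z₀)).indicator (gaussianPDFReal 0 6)) m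
  rw [htrans, intervalIntegral.integral_Iic_sub_Iic
    ((integrable_gaussianPDFReal 0 6).integrableOn) ((integrable_gaussianPDFReal 0 6).integrableOn)]
  -- now compute ∫ in -z₀..z₀, pdf
  have hpdf : ∀ z : ℝ, gaussianPDFReal 0 6 z
      = (Real.sqrt (2 * π * 6))⁻¹ * Real.exp (-((z / Real.sqrt 12) ^ 2)) := by
    intro z
    simp only [gaussianPDFReal, sub_zero, NNReal.coe_ofNat]
    congr 1
    rw [div_pow, Real.sq_sqrt (by norm_num : (12:ℝ) ≥ 0)]
    ring_nf
  simp only [hpdf]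
  rw [intervalIntegral.integral_const_mul]
  have h12 : Real.sqrt 12 ≠ 0 := by positivity
  rw [intervalIntegral.integral_comp_div (fun t => Real.exp (-(t ^ 2))) h12]
  have hx₀ : z₀ / Real.sqrt 12 = 1 / (4 * Real.sqrt 3 * s) := by
    have h412 : Real.sqrt 12 = 2 * Real.sqrt 3 := by
      rw [show (12:ℝ) = 2^2 * 3 by norm_num, Real.sqrt_mul (by positivity),
        Real.sqrt_sq (by norm_num)]
    rw [hz₀, h412]
    field_simp
    ring
  set x₀ : ℝ := 1 / (4 * Real.sqrt 3 * s) with hx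
  have hx₀pos : 0 < x₀ := by
    rw [hx]; positivity
  rw [hx₀, show -z₀ / Real.sqrt 12 = -(z₀ / Real.sqrt 12) by ring, hx₀]
  -- symmetry: ∫ in -x₀..x₀ = 2 * ∫ in 0..x₀
  have hcont : Continuous (fun t : ℝ => Real.exp (-(t ^ 2))) := by continuity
  have hsym : (∫ t in (-x₀)..x₀, Real.exp (-(t ^ 2)))
      = 2 * ∫ t in (0:ℝ)..x₀, Real.exp (-(t ^ 2)) := by
    rw [← intervalIntegral.integral_add_adjacent_intervals
      (hcont.intervalIntegrable (-x₀) 0) (hcont.intervalIntegrable 0 x₀)]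
    have : (∫ t in (-x₀)..(0:ℝ), Real.exp (-(t ^ 2)))
        = ∫ t in (0:ℝ)..x₀, Real.exp (-(t ^ 2)) := by
      rw [show (0:ℝ) = -0 by ring, ← intervalIntegral.integral_comp_neg
        (fun t => Real.exp (-(t ^ 2)))]
      simp [neg_pow]
    rw [this]; ring
  rw [hsym]
  -- final constant arithmetic
  have hπ : (0:ℝ) < Real.sqrt π := Real.sqrt_pos.2 Real.pi_pos
  have h2π6 : Real.sqrt (2 * π * 6) = Real.sqrt 12 * Real.sqrt π := by
    rw [show (2:ℝ) * π * 6 = 12 * π by ring, Real.sqrt_mul (by norm_num)]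
  rw [h2π6]
  have h12' : (0:ℝ) < Real.sqrt 12 := by positivity
  rw [smul_eq_mul]
  field_simp

/-- The Gauss error function `Erf x = (2/√π) ∫₀ˣ e^{-t²} dt`. -/
noncomputable def Erf (x : ℝ) : ℝ :=
  (2 / Real.sqrt Real.pi) * ∫ t in (0 : ℝ)..x, Real.exp (-t ^ 2)

/-- For `c > 0` and `Z ~ N(0,6)`,
`E[(1 - exp(-1/(12c) + Z/(6√c)))₊] = Erf(1/(4√3·√c))`. -/
theorem wishart_stmt_1 (c : ℝ) (hc : 0 < c) :
    ∫ z, max (1 - Real.exp (-(1 / (12 * c)) + z / (6 * Real.sqrt c))) 0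
        ∂(gaussianReal 0 6)
      = Erf (1 / (4 * Real.sqrt 3 * Real.sqrt c)) := by
  have h6 : (6 : NNReal) ≠ 0 := by norm_num
  rw [gaussianReal_of_var_ne_zero 0 h6]
  have hmeas : Measurable (fun x => Real.toNNReal (gaussianPDFReal 0 6 x)) :=
    (measurable_gaussianPDFReal 0 6).real_toNNReal
  have hwd : gaussianPDF 0 6 = fun x => ((Real.toNNReal (gaussianPDFReal 0 6 x) : NNReal) : ENNReal) := by
    funext x; rfl
  rw [hwd, integral_withDensity_eq_integral_smul hmeas]
  rw [Erf, ← wishart_aux c hc]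
  congr 1
  funext z
  rw [NNReal.smul_def, smul_eq_mul,
    Real.coe_toNNReal _ (gaussianPDFReal_nonneg 0 6 z)]
end

section
/- Let c > 0 and Z ~ N(0,6). Then 1 - exp(-1/(12c) + z/(6√c)) ≥ 0 if and only if z ≤ 1/(2√c), and consequently E[(1 - exp(-1/(12c) + Z/(6√c)))₊] = P(Z < 1/(2√c)) - P(Z < -1/(2√c)). -/
open MeasureTheory ProbabilityTheory Real

lemma integral_gaussianReal_eq6 (f : ℝ → ℝ) :
    ∫ z, f z ∂(gaussianReal 0 6) = ∫ z, gaussianPDFReal 0 6 z * f z := by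
  rw [gaussianReal_of_var_ne_zero 0 (by norm_num : (6 : NNReal) ≠ 0)]
  have h : (gaussianPDF 0 6) = fun x => ((gaussianPDFReal 0 6 x).toNNReal : ENNReal) := rfl
  rw [h, integral_withDensity_eq_integral_smul
    ((measurable_gaussianPDFReal 0 6).real_toNNReal) f]
  congr 1
  funext x
  simp [NNReal.smul_def, Real.coe_toNNReal _ (gaussianPDFReal_nonneg 0 6 x)]

lemma gaussianReal_toReal_Iic (m : ℝ) (a : ℝ) :
    (gaussianReal m 6 (Set.Iic a)).toReal = ∫ z in Set.Iic a, gaussianPDFReal m 6 z := by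
  rw [gaussianReal_apply_eq_integral m (by norm_num : (6 : NNReal) ≠ 0),
    ENNReal.toReal_ofReal (integral_nonneg fun z => gaussianPDFReal_nonneg m 6 z)]

/-- For `c > 0` and `Z ~ N(0,6)`: `1 - exp(-1/(12c) + z/(6√c)) ≥ 0` iff `z ≤ 1/(2√c)`,
and consequently `E[(1 - exp(-1/(12c) + Z/(6√c)))₊] = P(Z < 1/(2√c)) - P(Z < -1/(2√c))`. -/
theorem wishart_stmt_2 (c : ℝ) (hc : 0 < c) :
    (∀ z : ℝ, 0 ≤ 1 - Real.exp (-(1 / (12 * c)) + z / (6 * Real.sqrt c))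
        ↔ z ≤ 1 / (2 * Real.sqrt c)) ∧
    (∫ z, max (1 - Real.exp (-(1 / (12 * c)) + z / (6 * Real.sqrt c))) 0
        ∂(gaussianReal 0 6))
      = (gaussianReal 0 6 {z | z < 1 / (2 * Real.sqrt c)}).toReal
        - (gaussianReal 0 6 {z | z < -(1 / (2 * Real.sqrt c))}).toReal := by
  have hs : 0 < Real.sqrt c := Real.sqrt_pos.mpr hc
  set s := Real.sqrt c with hsdef
  have hs2 : s ^ 2 = c := Real.sq_sqrt hc.le
  set a : ℝ := 1 / (2 * s) with ha
  have key : ∀ z : ℝ, -(1 / (12 * c)) + z / (6 * s) = (z - a) / (6 * s) := by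
    intro z
    rw [← hs2, ha]
    field_simp
    ring
  have hiff : ∀ z : ℝ, 0 ≤ 1 - Real.exp (-(1 / (12 * c)) + z / (6 * s)) ↔ z ≤ a := by
    intro z
    rw [sub_nonneg, Real.exp_le_one_iff, key z,
      div_nonpos_iff]
    constructor
    · rintro (⟨h1, h2⟩ | ⟨h1, _⟩)
      · nlinarith
      · linarith [sub_nonpos.mpr (show z - a ≤ 0 by nlinarith)]
    · intro h
      exact Or.inr ⟨sub_nonpos.mpr h, by positivity⟩
  refine ⟨hiff, ?_⟩
  -- rewrite max as indicator
  have hmax : (fun z => max (1 - Real.exp (-(1 / (12 * c)) + z / (6 * s))) 0)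
      = (Set.Iic a).indicator (fun z => 1 - Real.exp (-(1 / (12 * c)) + z / (6 * s))) := by
    funext z
    by_cases hz : z ≤ a
    · rw [Set.indicator_of_mem (Set.mem_Iic.mpr hz), max_eq_left ((hiff z).mpr hz)]
    · rw [Set.indicator_of_notMem (by simpa using hz), max_eq_right]
      have := (hiff z).not
      push_neg at this
      exact (this.mpr (lt_of_not_ge hz)).le
  -- pointwise density identity
  have hm : ∀ z : ℝ, gaussianPDFReal 0 6 z * Real.exp (-(1 / (12 * c)) + z / (6 * s))
      = gaussianPDFReal (1 / s) 6 z := by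
    intro z
    simp only [gaussianPDFReal]
    rw [mul_assoc, ← Real.exp_add]
    congr 1
    rw [← hs2]
    push_cast
    field_simp
    ring
  have h6 : (6 : NNReal) ≠ 0 := by norm_num
  calc (∫ z, max (1 - Real.exp (-(1 / (12 * c)) + z / (6 * s))) 0 ∂(gaussianReal 0 6))
      = ∫ z, gaussianPDFReal 0 6 z *
          (Set.Iic a).indicator (fun z => 1 - Real.exp (-(1 / (12 * c)) + z / (6 * s))) z := by
        rw [show (fun z => max (1 - Real.exp (-(1 / (12 * c)) + z / (6 * s))) 0) =
          (Set.Iic a).indicator (fun z => 1 - Real.exp (-(1 / (12 * c)) + z / (6 * s))) from hmax]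
          at *
        exact integral_gaussianReal_eq6 _
    _ = ∫ z in Set.Iic a, gaussianPDFReal 0 6 z
          - gaussianPDFReal (1 / s) 6 z := by
        rw [← integral_indicator measurableSet_Iic]
        congr 1
        funext z
        by_cases hz : z ∈ Set.Iic a
        · rw [Set.indicator_of_mem hz, Set.indicator_of_mem hz, mul_sub, mul_one, hm z]
        · rw [Set.indicator_of_notMem hz, Set.indicator_of_notMem hz, mul_zero]
    _ = (∫ z in Set.Iic a, gaussianPDFReal 0 6 z)
          - ∫ z in Set.Iic a, gaussianPDFReal (1 / s) 6 z :=
        integral_sub ((integrable_gaussianPDFReal 0 6).restrict)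
          ((integrable_gaussianPDFReal (1 / s) 6).restrict)
    _ = (gaussianReal 0 6 (Set.Iic a)).toReal
          - (gaussianReal (1 / s) 6 (Set.Iic a)).toReal := by
        rw [gaussianReal_toReal_Iic, gaussianReal_toReal_Iic]
    _ = (gaussianReal 0 6 {z | z < a}).toReal
          - (gaussianReal 0 6 {z | z < -a}).toReal := by
        have hsing : ∀ x : ℝ, gaussianReal 0 6 {x} = 0 := fun x =>
          gaussianReal_absolutelyContinuous 0 h6 (measure_singleton x)
        have hIicIio : ∀ x : ℝ, gaussianReal 0 6 (Set.Iic x) = gaussianReal 0 6 (Set.Iio x) := by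
          intro x
          rw [← Set.Iio_union_right, measure_union _ (measurableSet_singleton x), hsing, add_zero]
          simp [Set.disjoint_singleton_right]
        have hshift : gaussianReal (1 / s) 6 (Set.Iic a) = gaussianReal 0 6 (Set.Iic (-a)) := by
          rw [show (1 / s : ℝ) = 0 + 1 / s by ring, ← gaussianReal_map_add_const (1 / s),
            Measure.map_apply (measurable_add_const _) measurableSet_Iic,
            Set.preimage_add_const_Iic]
          have hae : a - 1 / s = -a := by
            rw [ha]
            field_simp
            ring
          rw [hae]
        rw [hshift, hIicIio, hIicIio]
        rfl
end
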